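/- Let k ≥ 2 be an integer, let i = 1, let r, s be positive integers, and let n ≥ 0 be an integer. Then det(A_k · Q_k^{n+1}) = s^{n+k}·(-1)^{((k-1)(k+6) + 2(k+1)(n+1))/2}. -/

import Mathlib

/-- Auxiliary sequence: `genFibAux i k r s m` equals `F^i_{r,s}(k, m-1)`, i.e. the
four-parameters sequence indexed by `m = n + 1 ≥ 0`.  For `i ≤ k` the initial values
(`-1 ≤ n ≤ k-2`, i.e. `m < k`) are `r^⌊(n+1)/i⌋`, for `k < i` (`m < i`) they are
`s^⌊(n+1)/k⌋`, and for `n ≥ max{k,i} - 1` the recurrence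
`F(n) = r·F(n-i) + s·F(n-k)` holds. -/
def genFibAux (i k r s : ℕ) : ℕ → ℤ
  | m =>
    if m < max (max k i) 1 then
      if i ≤ k then (r : ℤ) ^ (m / i) else (s : ℤ) ^ (m / k)
    else
      r * genFibAux i k r s (m - max i 1) + s * genFibAux i k r s (m - max k 1)
  termination_by m => m
  decreasing_by all_goals omega

/-- The four-parameters sequence `F^i_{r,s}(k,n)` for integer `n ≥ -1`, with the
convention that it vanishes for `n ≤ -2`. -/
def genFib (i k r s : ℕ) (n : ℤ) : ℤ :=
  if n < -1 then 0 else genFibAux i k r s (n + 1).toNat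

/-- The matrix `Q_k` (rows/columns indexed by `Fin k`, corresponding to the
1-indexed rows/columns `1, …, k`): entry `1` at `(t, t+1)`; the first column has
entry `r` in row `i` and entry `s` in row `k` when `i < k`, and entry `r + s` in
row `k` when `i = k`; all other entries vanish. -/
def Qmat (i k r s : ℕ) : Matrix (Fin k) (Fin k) ℤ :=
  Matrix.of fun t j =>
    if (j : ℕ) = (t : ℕ) + 1 then 1
    else if (j : ℕ) = 0 then
      if i = k then (if (t : ℕ) = k - 1 then (r : ℤ) + s else 0)
      else if (t : ℕ) = i - 1 then (r : ℤ)
      else if (t : ℕ) = k - 1 then (s : ℤ)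
      else 0
    else 0

/-- The matrix `A_k` of initial conditions: its `(t, j)` entry (1-indexed) is
`F^i_{r,s}(k, 2k-1-t-j)`. -/
def Amat (i k r s : ℕ) : Matrix (Fin k) (Fin k) ℤ :=
  Matrix.of fun t j =>
    genFib i k r s (2 * (k : ℤ) - 3 - ((t : ℕ) : ℤ) - ((j : ℕ) : ℤ))

/-!
The recurrence `F(n) = r F(n-1) + s F(n-k)` (valid for all `n ≥ 0` when `i = 1`) says exactly that
right multiplication by `Q_k` shifts the Hankel matrix `H(N)_{tj} = F(N-t-j)` to `H(N+1)`, as long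
as `N ≥ k-2`. Since `A_k = H(2k-3)`, this gives `A_k Q_k^{n+1} = H(k-2) Q_k^{n+k}`. The matrix
`H(k-2)` vanishes below its antidiagonal, where `F(-1) = 1`, so its determinant is the sign
`(-1)^{k(k-1)/2}` of the reversal; `det Q_k = (-1)^{k-1} s` by expanding along the first column.
The sign in the statement has the same parity as the product of these.
-/

open Equiv Matrix Finset

theorem Fin.sign_revPerm (n : ℕ) :
    Perm.sign (Fin.revPerm : Perm (Fin n)) = (-1) ^ (n * (n - 1) / 2) := by
  have inner (j : Fin n) :
      ∏ i ∈ Iio j, (if Fin.revPerm i < Fin.revPerm j then 1 else -1 : ℤˣ) =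
        (-1) ^ (j : ℕ) := by
    rw [prod_congr rfl fun i hi => if_neg (by simpa [Fin.rev_lt_rev] using (mem_Iio.1 hi).le),
      Finset.prod_const, Fin.card_Iio]
  rw [Perm.sign_eq_prod_prod_Iio, Fintype.prod_congr _ _ inner, prod_pow_eq_pow_sum,
    Fin.sum_univ_eq_sum_range (fun j => j), sum_range_id]

section Determinant

variable {R : Type*} [CommRing R]

theorem Matrix.det_of_eq_zero_of_rev_lt {n : ℕ} (M : Matrix (Fin n) (Fin n) R)
    (h : ∀ t j, Fin.rev j < t → M t j = 0) :
    M.det = (-1) ^ (n * (n - 1) / 2) * ∏ t, M t t.rev := by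
  have hM : (M.submatrix id Fin.revPerm).submatrix id Fin.revPerm = M := by
    ext; simp
  have htri : (M.submatrix id Fin.revPerm).BlockTriangular id := fun t j hjt =>
    h t _ (by simpa using hjt)
  rw [← hM, det_permute', det_of_isUpperTriangular htri, Fin.sign_revPerm]
  simp

theorem Matrix.det_of_apply_succ {n : ℕ} (M : Matrix (Fin (n + 1)) (Fin (n + 1)) R)
    (h : ∀ t (j : Fin n), M t j.succ = if t = j.castSucc then 1 else 0) :
    M.det = (-1) ^ n * M (Fin.last n) 0 := by
  rw [det_succ_column_zero, sum_eq_single (Fin.last n)]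
  · have hminor : M.submatrix Fin.castSucc Fin.succ = 1 := by
      ext a b
      simp [h, one_apply]
    simp [Fin.succAbove_last, hminor]
  · intro i _ hi
    obtain ⟨a, ha⟩ := Fin.exists_succAbove_eq hi.symm
    rw [det_eq_zero_of_row_eq_zero a fun b => by simp [ha, h, (Fin.castSucc_lt_last b).ne'],
      mul_zero]
  · simp

end Determinant

section GenFib

variable {k r s : ℕ}

theorem genFib_of_lt_neg_one {n : ℤ} (hn : n < -1) : genFib 1 k r s n = 0 := if_pos hn

theorem genFib_of_neg_one_le {n : ℤ} (hn : -1 ≤ n) :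
    genFib 1 k r s n = genFibAux 1 k r s (n + 1).toNat := if_neg (by omega)

theorem genFib_of_le (hk : 0 < k) {n : ℤ} (h₁ : -1 ≤ n) (h₂ : n ≤ k - 2) :
    genFib 1 k r s n = (r : ℤ) ^ (n + 1).toNat := by
  rw [genFib_of_neg_one_le h₁, genFibAux, if_pos (by omega), if_pos (by omega : 1 ≤ k),
    Nat.div_one]

theorem genFib_neg_one (hk : 0 < k) : genFib 1 k r s (-1) = 1 := by
  simp [genFib_of_le hk le_rfl (by omega)]

theorem genFib_rec (hk : 0 < k) {n : ℤ} (hn : 0 ≤ n) :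
    genFib 1 k r s n = r * genFib 1 k r s (n - 1) + s * genFib 1 k r s (n - k) := by
  rcases lt_or_ge n (k - 1) with hnk | hnk
  · rw [genFib_of_le hk (by omega) (by omega), genFib_of_le hk (by omega) (by omega),
      genFib_of_lt_neg_one (by omega), show (n + 1).toNat = (n - 1 + 1).toNat + 1 by omega,
      pow_succ]
    ring
  · rw [genFib_of_neg_one_le (by omega), genFib_of_neg_one_le (by omega),
      genFib_of_neg_one_le (by omega), genFibAux, if_neg (by omega),
      show (n + 1).toNat - max 1 1 = (n - 1 + 1).toNat by omega,
      show (n + 1).toNat - max k 1 = (n - k + 1).toNat by omega]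

end GenFib

section Qmat

variable {m r s : ℕ}

theorem Qmat_one_apply_succ (t : Fin (m + 2)) (j : Fin (m + 1)) :
    Qmat 1 (m + 2) r s t j.succ = if t = j.castSucc then 1 else 0 := by
  simp only [Qmat, of_apply, Fin.ext_iff, Fin.val_succ, Fin.val_castSucc]
  grind

theorem Qmat_one_apply_zero (t : Fin (m + 2)) :
    Qmat 1 (m + 2) r s t 0 =
      (if t = 0 then (r : ℤ) else 0) + if t = Fin.last _ then (s : ℤ) else 0 := by
  simp only [Qmat, of_apply, Fin.ext_iff, Fin.val_zero, Fin.val_last]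
  grind

theorem det_Qmat_one : (Qmat 1 (m + 2) r s).det = (-1) ^ (m + 1) * s := by
  rw [det_of_apply_succ _ Qmat_one_apply_succ, Qmat_one_apply_zero]
  simp [Fin.ext_iff]

end Qmat

def hankel (n : ℕ) (f : ℤ → ℤ) (N : ℤ) : Matrix (Fin n) (Fin n) ℤ :=
  of fun t j => f (N - t - j)

theorem Amat_one_eq_hankel (k r s : ℕ) : Amat 1 k r s = hankel k (genFib 1 k r s) (2 * k - 3) :=
  rfl

section Hankel

variable {m r s : ℕ} {f : ℤ → ℤ}

theorem hankel_mul_Qmat_one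
    (hf : ∀ n, 0 ≤ n → f n = r * f (n - 1) + s * f (n - (m + 2 : ℕ)))
    {N : ℤ} (hN : m ≤ N) :
    hankel (m + 2) f N * Qmat 1 (m + 2) r s = hankel (m + 2) f (N + 1) := by
  ext t j
  cases j using Fin.cases with
  | zero =>
    simp only [mul_apply, Qmat_one_apply_zero, mul_add, mul_ite, mul_zero, sum_add_distrib,
      sum_ite_eq', mem_univ, if_true, hankel, of_apply, Fin.val_zero, Fin.val_last, Nat.cast_zero,
      sub_zero, Nat.cast_add, Nat.cast_one]
    rw [hf (N + 1 - t) (by omega), show N + 1 - t - 1 = N - t by ring,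
      show N + 1 - t - (m + 2 : ℕ) = N - t - (m + 1) by push_cast; ring]
    ring
  | succ j =>
    simp only [mul_apply, Qmat_one_apply_succ, mul_ite, mul_one, mul_zero, sum_ite_eq', mem_univ,
      if_true, hankel, of_apply, Fin.val_succ, Fin.val_castSucc]
    congr 1
    push_cast
    ring

theorem hankel_mul_Qmat_one_pow
    (hf : ∀ n, 0 ≤ n → f n = r * f (n - 1) + s * f (n - (m + 2 : ℕ)))
    {N : ℤ} (hN : m ≤ N) (p : ℕ) :
    hankel (m + 2) f N * Qmat 1 (m + 2) r s ^ p = hankel (m + 2) f (N + p) := by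
  induction p with
  | zero => simp
  | succ p ih =>
    rw [pow_succ, ← mul_assoc, ih, hankel_mul_Qmat_one hf (by omega), Nat.cast_succ, add_assoc]

end Hankel

theorem det_hankel {f : ℤ → ℤ} (hf₀ : ∀ n < -1, f n = 0) (hf₁ : f (-1) = 1) (n : ℕ) :
    (hankel n f (n - 2)).det = (-1) ^ (n * (n - 1) / 2) := by
  have hrev (j : Fin n) : ((j.rev : ℕ) : ℤ) = n - 1 - j := by
    rw [Fin.val_rev]; omega
  have hzero (t j : Fin n) (hjt : j.rev < t) : hankel n f (n - 2) t j = 0 :=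
    hf₀ _ (by have := Fin.lt_def.1 hjt; have := hrev j; omega)
  have hone (t : Fin n) : hankel n f (n - 2) t t.rev = 1 := by
    rw [hankel, of_apply, hrev, show (n : ℤ) - 2 - t - (n - 1 - t) = -1 by ring, hf₁]
  simp [det_of_eq_zero_of_rev_lt _ hzero, hone]

theorem neg_one_pow_sign_exponent_eq {k : ℕ} (hk : 1 ≤ k) (n : ℕ) :
    (-1 : ℤ) ^ (k * (k - 1) / 2 + (k - 1) * (k + n)) =
      (-1) ^ (((k - 1) * (k + 6) + 2 * (k + 1) * (n + 1)) / 2) := by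
  obtain ⟨j, rfl⟩ : ∃ j, k = j + 1 := ⟨k - 1, by omega⟩
  obtain ⟨T, hT⟩ : ∃ T, (j + 1) * j = 2 * T :=
    (Nat.even_mul_pred_self (j + 1)).exists_two_nsmul _
  simp only [Nat.add_sub_cancel]
  rw [show (j + 1) * j / 2 = T by omega,
    show (j * (j + 1 + 6) + 2 * (j + 1 + 1) * (n + 1)) / 2 = T + 3 * j + (j + 2) * (n + 1) by
      rw [Nat.div_eq_of_eq_mul_left two_pos]; linarith]
  apply neg_one_pow_congr
  simp only [Nat.even_add, Nat.even_mul, Nat.even_add_one, even_two, not_true_eq_false,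
    false_or]
  tauto

theorem Amat_mul_Qmat_pow_det_general (k r s : ℕ) (hk : 2 ≤ k)
    (n : ℕ) :
    (Amat 1 k r s * (Qmat 1 k r s) ^ (n + 1)).det =
      (s : ℤ) ^ (n + k) * (-1) ^ (((k - 1) * (k + 6) + 2 * (k + 1) * (n + 1)) / 2) := by
  obtain ⟨m, rfl⟩ : ∃ m, k = m + 2 := ⟨k - 2, by omega⟩
  have hA : Amat 1 (m + 2) r s =
      hankel (m + 2) (genFib 1 (m + 2) r s) ((m + 2 : ℕ) - 2) * Qmat 1 (m + 2) r s ^ (m + 1) := by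
    rw [Amat_one_eq_hankel, hankel_mul_Qmat_one_pow (fun _ => genFib_rec (by omega))
      (by push_cast; omega)]
    congr 1
    push_cast
    ring
  rw [hA, mul_assoc, ← pow_add, det_mul, det_pow,
    det_hankel (fun _ => genFib_of_lt_neg_one) (genFib_neg_one (by omega)), det_Qmat_one,
    ← neg_one_pow_sign_exponent_eq (by omega), show m + 2 - 1 = m + 1 from rfl]
  ring

/-- For an integer `k ≥ 2`, `i = 1`, positive integers `r, s`,
and an integer `n ≥ 0`,
`det(A_k · Q_k^{n+1}) = s^{n+k}·(-1)^{((k-1)(k+6) + 2(k+1)(n+1))/2}`. -/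
theorem Amat_mul_Qmat_pow_det (k r s : ℕ) (hk : 2 ≤ k) (hr : 0 < r) (hs : 0 < s)
    (n : ℕ) :
    (Amat 1 k r s * (Qmat 1 k r s) ^ (n + 1)).det =
      (s : ℤ) ^ (n + k) * (-1) ^ (((k - 1) * (k + 6) + 2 * (k + 1) * (n + 1)) / 2) :=
  Amat_mul_Qmat_pow_det_general k r s hk n
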